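/- arXiv:1703.08480 — 2 statements merged into one kernel-verified Lean document; each statement's English description precedes it below -/
import Mathlib

section
/- The system y = G_u u + G_d d + G_f f (w ≡ 0) is completely fault detectable if and only if for every j = 1, …, m_f, rank [G_d(λ) G_{f_j}(λ)] > rank G_d(λ) (normal ranks over rational functions). -/
/-!
Statement 1: The system y = G_u u + G_d d + G_f f (w ≡ 0) is completely fault
detectable (one proper stable filter Q decoupling u and d whose residual is
sensitive to every individual fault) if and only if for every j = 1, …, m_f,
rank [G_d(λ)  G_{f_j}(λ)] > rank G_d(λ) (normal ranks over rational functions).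
-/

open Matrix Polynomial

noncomputable section

/-- A real rational function is proper. -/
def RatFunc.IsProperR (f : RatFunc ℝ) : Prop :=
  f.num.natDegree ≤ f.denom.natDegree

/-- A real rational function is stable (continuous time): every complex pole has
negative real part. -/
def RatFunc.IsStableR (f : RatFunc ℝ) : Prop :=
  ∀ z : ℂ, (f.denom.map (algebraMap ℝ ℂ)).IsRoot z → z.re < 0

/-- A rational matrix is proper if all its entries are proper. -/
def Matrix.IsProperR {m n : Type*} (G : Matrix m n (RatFunc ℝ)) : Prop :=
  ∀ i j, (G i j).IsProperR

/-- A rational matrix is stable if all its entries are stable. -/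
def Matrix.IsStableR {m n : Type*} (G : Matrix m n (RatFunc ℝ)) : Prop :=
  ∀ i j, (G i j).IsStableR

/-- The `j`-th column of a rational matrix, as a one-column matrix. -/
def colMat {p mf : ℕ} (G : Matrix (Fin p) (Fin mf) (RatFunc ℝ)) (j : Fin mf) :
    Matrix (Fin p) (Fin 1) (RatFunc ℝ) :=
  Matrix.of fun i _ => G i j


/-!
A filter `Q = [V W]` decouples `u` exactly when `W = -V G_u`, and then it decouples `d` exactly
when `V G_d = 0`. So complete detectability asks, for each fault `j`, for a left annihilator of
`G_d` that does not annihilate `G_{f_j}`; by rank–nullity for the transposes, such a vector exists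
iff appending `G_{f_j}` to `G_d` raises the rank. Properness and stability cost nothing:
multiplying a rational filter by `d / (s + 1)^N`, with `d` a common denominator of its entries and
`N` large, makes it proper and stable without changing which products vanish.
-/

namespace Matrix

theorem rank_add_finrank_ker_mulVecLin_transpose {K m n : Type*} [Field K] [Fintype m]
    [Fintype n] (M : Matrix m n K) :
    M.rank + Module.finrank K (LinearMap.ker Mᵀ.mulVecLin) = Fintype.card m := by
  rw [← rank_transpose, ← Module.finrank_fintype_fun_eq_card K]
  exact LinearMap.finrank_range_add_finrank_ker _

theorem rank_lt_rank_fromCols_iff {K m n n' : Type*} [Field K] [Fintype m] [Fintype n]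
    [Fintype n'] (A : Matrix m n K) (B : Matrix m n' K) :
    A.rank < (fromCols A B).rank ↔ ∃ v, v ᵥ* A = 0 ∧ v ᵥ* B ≠ 0 := by
  have hA := rank_add_finrank_ker_mulVecLin_transpose A
  have hAB := rank_add_finrank_ker_mulVecLin_transpose (fromCols A B)
  have ker_fromCols : LinearMap.ker (fromCols A B)ᵀ.mulVecLin =
      LinearMap.ker Aᵀ.mulVecLin ⊓ LinearMap.ker Bᵀ.mulVecLin := by
    ext v
    simp [transpose_fromCols, ← Sum.elim_zero_zero, Sum.elim_eq_iff, mulVec_transpose]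
  rw [ker_fromCols] at hAB
  have rank_lt_iff : A.rank < (fromCols A B).rank ↔
      ¬ LinearMap.ker Aᵀ.mulVecLin ≤ LinearMap.ker Bᵀ.mulVecLin := by
    constructor
    · intro h hle
      rw [inf_eq_left.mpr hle] at hAB
      omega
    · intro h
      have := Submodule.finrank_lt_finrank_of_lt (inf_lt_left.mpr h)
      omega
  simp [rank_lt_iff, SetLike.not_le_iff_exists]

theorem mul_fromRows_zero {R l m k n : Type*} [Semiring R] [Fintype m] [Fintype k]
    (Q : Matrix l (m ⊕ k) R) (B : Matrix m n R) :
    -- without the ascription on `0`, this `*` elaborates to `CStarMatrix`'s multiplication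
    Q * fromRows B (0 : Matrix k n R) = Q.toCols₁ * B := by
  nth_rw 1 [← fromCols_toCols Q]
  rw [fromCols_mul_fromRows, Matrix.mul_zero, add_zero]

end Matrix

theorem vecMul_colMat_eq_zero_iff {p mf : ℕ} (v : Fin p → RatFunc ℝ)
    (G : Matrix (Fin p) (Fin mf) (RatFunc ℝ)) (j : Fin mf) :
    v ᵥ* colMat G j = 0 ↔ (v ᵥ* G) j = 0 :=
  ⟨fun h => congrFun h 0, fun h => funext fun _ => h⟩

namespace RatFunc

theorem isProperR_iff_intDegree_nonpos (f : RatFunc ℝ) : f.IsProperR ↔ f.intDegree ≤ 0 := by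
  unfold IsProperR intDegree
  omega

theorem isProperR_div {P D : ℝ[X]} (hD : D ≠ 0) (h : P.natDegree ≤ D.natDegree) :
    (algebraMap ℝ[X] (RatFunc ℝ) P / algebraMap ℝ[X] (RatFunc ℝ) D).IsProperR := by
  rcases eq_or_ne P 0 with rfl | hP
  · simp [IsProperR]
  rw [isProperR_iff_intDegree_nonpos, intDegree_div (by simpa) (by simpa), intDegree_polynomial,
    intDegree_polynomial]
  omega

theorem isStableR_div {P D : ℝ[X]} (hD : D ≠ 0)
    (hroots : ∀ z : ℂ, (D.map (algebraMap ℝ ℂ)).IsRoot z → z.re < 0) :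
    (algebraMap ℝ[X] (RatFunc ℝ) P / algebraMap ℝ[X] (RatFunc ℝ) D).IsStableR := by
  intro z hz
  obtain ⟨t, ht⟩ := (denom_dvd hD).mpr ⟨P, rfl⟩
  apply hroots z
  rw [ht, Polynomial.map_mul, IsRoot, Polynomial.eval_mul, hz.eq_zero, zero_mul]

end RatFunc

theorem Matrix.exists_smul_isProperR_isStableR {m n : Type*} [Fintype m] [Fintype n]
    (Q : Matrix m n (RatFunc ℝ)) :
    ∃ α : RatFunc ℝ, α ≠ 0 ∧ (α • Q).IsProperR ∧ (α • Q).IsStableR := by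
  obtain ⟨⟨d, hd⟩, hP⟩ := IsLocalization.exist_integer_multiples_of_finite
    (nonZeroDivisors ℝ[X]) fun ij : m × n => Q ij.1 ij.2
  choose P hP using hP
  set N := ∑ ij, (P ij).natDegree
  have hD : (X + C 1 : ℝ[X]) ^ N ≠ 0 := pow_ne_zero _ (X_add_C_ne_zero 1)
  have hD_roots (z : ℂ) (hz : (((X + C 1 : ℝ[X]) ^ N).map (algebraMap ℝ ℂ)).IsRoot z) :
      z.re < 0 := by
    simp only [Polynomial.map_pow, Polynomial.map_add, Polynomial.map_X, IsRoot, eval_pow,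
      eval_add, eval_X, pow_eq_zero_iff', map_one] at hz
    rw [eq_neg_of_add_eq_zero_left hz.1]
    norm_num
  set α := algebraMap ℝ[X] (RatFunc ℝ) d / algebraMap ℝ[X] (RatFunc ℝ) ((X + C 1) ^ N)
  have entry (i : m) (j : n) : (α • Q) i j =
      algebraMap ℝ[X] (RatFunc ℝ) (P (i, j)) / algebraMap ℝ[X] (RatFunc ℝ) ((X + C 1) ^ N) := by
    rw [smul_apply, smul_eq_mul, div_mul_eq_mul_div, ← Algebra.smul_def, hP]
  refine ⟨α, div_ne_zero ?_ (RatFunc.algebraMap_ne_zero hD), fun i j => ?_, fun i j => ?_⟩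
  · exact RatFunc.algebraMap_ne_zero (nonZeroDivisors.ne_zero hd)
  · rw [entry]
    refine RatFunc.isProperR_div hD ?_
    rw [natDegree_pow, natDegree_X_add_C, mul_one]
    exact Finset.single_le_sum (f := fun ij => (P ij).natDegree) (fun _ _ => Nat.zero_le _)
      (Finset.mem_univ (i, j))
  · rw [entry]
    exact RatFunc.isStableR_div hD hD_roots

/-- **Complete fault detectability characterization**. -/
theorem completely_fault_detectable_iff_rank
    (p mu md mf : ℕ)
    (Gu : Matrix (Fin p) (Fin mu) (RatFunc ℝ))
    (Gd : Matrix (Fin p) (Fin md) (RatFunc ℝ))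
    (Gf : Matrix (Fin p) (Fin mf) (RatFunc ℝ)) :
    (∃ (q : ℕ) (Q : Matrix (Fin q) (Fin p ⊕ Fin mu) (RatFunc ℝ)),
        Q.IsProperR ∧ Q.IsStableR ∧
        Q * Matrix.fromRows Gu (1 : Matrix (Fin mu) (Fin mu) (RatFunc ℝ)) = 0 ∧
        Q * Matrix.fromRows Gd (0 : Matrix (Fin mu) (Fin md) (RatFunc ℝ)) = 0 ∧
        ∀ j : Fin mf,
          Q * Matrix.fromRows (colMat Gf j) (0 : Matrix (Fin mu) (Fin 1) (RatFunc ℝ)) ≠ 0) ↔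
      ∀ j : Fin mf, Gd.rank < (Matrix.fromCols Gd (colMat Gf j)).rank := by
  simp only [rank_lt_rank_fromCols_iff, ne_eq, vecMul_colMat_eq_zero_iff]
  constructor
  · rintro ⟨q, Q, -, -, -, hd, hf⟩ j
    simp only [mul_fromRows_zero] at hd hf
    obtain ⟨r, hr⟩ : ∃ r, (Q.toCols₁ r ᵥ* Gf) j ≠ 0 := by
      by_contra! h
      exact hf j (by ext r k; exact h r)
    exact ⟨Q.toCols₁ r, by rw [← mul_apply_eq_vecMul, hd]; rfl, hr⟩
  · intro h
    choose v hvd hvf using h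
    have row_mul {n : ℕ} (B : Matrix (Fin p) (Fin n) (RatFunc ℝ)) (j : Fin mf) :
        (of v * B) j = v j ᵥ* B :=
      mul_apply_eq_vecMul _ _ _
    set Q₀ := fromCols (of v) (-(of v * Gu))
    obtain ⟨α, hα, hproper, hstable⟩ := Q₀.exists_smul_isProperR_isStableR
    refine ⟨mf, α • Q₀, hproper, hstable, ?_, ?_, fun j => ?_⟩
    · simp [Q₀, smul_mul, fromCols_mul_fromRows]
    · have hVd : of v * Gd = 0 := funext fun j => by rw [row_mul, hvd j]; rfl
      rw [smul_mul, mul_fromRows_zero, toCols₁_fromCols, hVd, smul_zero]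
    · rw [smul_mul, mul_fromRows_zero, toCols₁_fromCols]
      refine smul_ne_zero hα fun h0 => hvf j ((vecMul_colMat_eq_zero_iff _ _ _).mp ?_)
      rw [← row_mul, h0]
      rfl

end
end

section
/- For a multiple model of N LTI systems, the approximate model detection problem (AMDP) is solvable if and only if the exact model detection problem (EMDP) is solvable; equivalently, the AMDP is solvable if and only if the multiple model (with noise inputs set to zero) is model detectable. -/
/-!
Forgetting the noise conditions turns an AMDP solution into an EMDP solution.

If `Q = [Q₁ Q₂]` solves the EMDP, decoupling forces `Q₁ G_d⁽ⁱ⁾ = 0` and `Q₂ = -Q₁ G_u⁽ⁱ⁾`, so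
`R_u⁽ⁱʲ⁾ = Q₁ (G_u⁽ʲ⁾ - G_u⁽ⁱ⁾) ≠ 0`: some row of `Q₁` lies in the left kernel of `G_d⁽ⁱ⁾` but
not in that of `G_u⁽ⁱ⁾ - G_u⁽ʲ⁾`, which is exactly the rank condition.

Conversely, a vector space over the infinite field `ℝ(s)` is not a finite union of proper
subspaces, so the rank conditions give one row vector `w` with `w G_d⁽ⁱ⁾ = 0` and
`w (G_u⁽ⁱ⁾ - G_u⁽ʲ⁾) ≠ 0` for all `j ≠ i`. The filter `σ [w, -w G_u⁽ⁱ⁾]` satisfies the algebraic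
conditions for every scalar `σ ≠ 0`, and all its entries and those of its internal forms are `σ`
times finitely many fixed rational functions. With `σ = c D / (s + 1)ᴹ`, `D` a common multiple of
their denominators and `M` large, each of them becomes `P / (s + 1)ᴹ` with `deg P ≤ M`: proper,
stable, and bounded on the imaginary axis by `∑ |Pₖ|` because `|iω + 1| ≥ max 1 |ω|`. A small
constant `c` then makes the noise channel `R_w⁽ⁱⁱ⁾` as small as required.
-/

open Matrix Polynomial

noncomputable section

/-- The `H∞`-norm of a real rational matrix. -/
noncomputable def hinfNorm {m n : Type*} [Fintype m] [Fintype n]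
    (G : Matrix m n (RatFunc ℝ)) : ℝ :=
  ⨆ ω : ℝ, ⨆ i : m, ⨆ j : n,
    ‖RatFunc.eval (algebraMap ℝ ℂ) (Complex.I * ω) (G i j)‖

/-- Solvability of the exact model detection problem (EMDP) for the multiple
model with noise inputs set to zero: N proper stable filters with exact
decoupling of the own model and stable internal forms whose control channel is
nonzero for each other model. -/
def EMDPSolvable {N p mu : ℕ} {md : Fin N → ℕ}
    (Gu : ∀ _ : Fin N, Matrix (Fin p) (Fin mu) (RatFunc ℝ))
    (Gd : ∀ j : Fin N, Matrix (Fin p) (Fin (md j)) (RatFunc ℝ)) : Prop :=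
  ∃ (q : Fin N → ℕ)
    (Q : ∀ i : Fin N, Matrix (Fin (q i)) (Fin p ⊕ Fin mu) (RatFunc ℝ)),
    (∀ i : Fin N, (Q i).IsProperR ∧ (Q i).IsStableR) ∧
    (∀ i : Fin N,
      Q i * Matrix.fromRows (Matrix.fromCols (Gu i) (Gd i))
        (Matrix.fromCols (1 : Matrix (Fin mu) (Fin mu) (RatFunc ℝ))
          (0 : Matrix (Fin mu) (Fin (md i)) (RatFunc ℝ))) = 0) ∧
    (∀ i j : Fin N,
      (Q i * Matrix.fromRows (Matrix.fromCols (Gu j) (Gd j))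
        (Matrix.fromCols (1 : Matrix (Fin mu) (Fin mu) (RatFunc ℝ))
          (0 : Matrix (Fin mu) (Fin (md j)) (RatFunc ℝ)))).IsStableR) ∧
    (∀ i j : Fin N, i ≠ j →
      Q i * Matrix.fromRows (Gu j) (1 : Matrix (Fin mu) (Fin mu) (RatFunc ℝ)) ≠ 0)

/-- Solvability of the approximate model detection problem (AMDP): for every
`ε > 0` there are N proper stable filters achieving the EMDP conditions and,
in addition, stable noise channels with `‖R_w^{(i,i)}‖_∞ < ε`. -/
def AMDPSolvable {N p mu : ℕ} {md mw : Fin N → ℕ}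
    (Gu : ∀ _ : Fin N, Matrix (Fin p) (Fin mu) (RatFunc ℝ))
    (Gd : ∀ j : Fin N, Matrix (Fin p) (Fin (md j)) (RatFunc ℝ))
    (Gw : ∀ j : Fin N, Matrix (Fin p) (Fin (mw j)) (RatFunc ℝ)) : Prop :=
  ∀ ε : ℝ, 0 < ε →
    ∃ (q : Fin N → ℕ)
      (Q : ∀ i : Fin N, Matrix (Fin (q i)) (Fin p ⊕ Fin mu) (RatFunc ℝ)),
      (∀ i : Fin N, (Q i).IsProperR ∧ (Q i).IsStableR) ∧
      (∀ i : Fin N,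
        Q i * Matrix.fromRows (Matrix.fromCols (Gu i) (Gd i))
          (Matrix.fromCols (1 : Matrix (Fin mu) (Fin mu) (RatFunc ℝ))
            (0 : Matrix (Fin mu) (Fin (md i)) (RatFunc ℝ))) = 0) ∧
      (∀ i j : Fin N,
        (Q i * Matrix.fromRows (Matrix.fromCols (Gu j) (Gd j))
          (Matrix.fromCols (1 : Matrix (Fin mu) (Fin mu) (RatFunc ℝ))
            (0 : Matrix (Fin mu) (Fin (md j)) (RatFunc ℝ)))).IsStableR) ∧
      (∀ i j : Fin N, i ≠ j →
        Q i * Matrix.fromRows (Gu j) (1 : Matrix (Fin mu) (Fin mu) (RatFunc ℝ)) ≠ 0) ∧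
      (∀ i j : Fin N,
        (Q i * Matrix.fromRows (Gw j)
          (0 : Matrix (Fin mu) (Fin (mw j)) (RatFunc ℝ))).IsStableR) ∧
      (∀ i : Fin N,
        hinfNorm (Q i * Matrix.fromRows (Gw i)
          (0 : Matrix (Fin mu) (Fin (mw i)) (RatFunc ℝ))) < ε)

theorem Submodule.exists_mem_forall_notMem_of_forall_not_le {k E ι : Type*} [DivisionRing k]
    [Infinite k] [AddCommGroup E] [Module k E] [Finite ι] {W : Submodule k E}
    {P : ι → Submodule k E} (h : ∀ j, ¬ W ≤ P j) : ∃ v ∈ W, ∀ j, v ∉ P j := by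
  by_contra! hcover
  obtain ⟨j, hj⟩ := Subspace.exists_eq_top_of_iUnion_eq_univ (p := fun j => (P j).comap W.subtype)
    (Set.eq_univ_of_forall fun v => by simpa using hcover v v.2)
  exact h j (Submodule.comap_subtype_eq_top.mp hj)

namespace Matrix

section Blocks

variable {R : Type*} [CommRing R] {r m n n' : Type*} [Fintype m] [Fintype n]

lemma mul_fromRows_fromCols_one_zero [DecidableEq n] (Q : Matrix r (m ⊕ n) R)
    (A : Matrix m n R) (B : Matrix m n' R) :
    Q * fromRows (fromCols A B) (fromCols (1 : Matrix n n R) (0 : Matrix n n' R)) =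
      fromCols (Q.toCols₁ * A + Q.toCols₂) (Q.toCols₁ * B) := by
  conv_lhs => rw [← fromCols_toCols Q]
  rw [fromCols_mul_fromRows, mul_fromCols, mul_fromCols, Matrix.mul_one, Matrix.mul_zero]
  ext i (j | j) <;> simp

lemma mul_fromRows_one [DecidableEq n] (Q : Matrix r (m ⊕ n) R) (A : Matrix m n R) :
    Q * fromRows A (1 : Matrix n n R) = Q.toCols₁ * A + Q.toCols₂ := by
  conv_lhs => rw [← fromCols_toCols Q]
  rw [fromCols_mul_fromRows, Matrix.mul_one]

end Blocks

section Rank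

variable {K : Type*} [Field K] {r m n n' : Type*} [Fintype m] [Fintype n] [Fintype n']

lemma rank_add_finrank_ker_vecMulLinear (A : Matrix m n K) :
    A.rank + Module.finrank K (LinearMap.ker A.vecMulLinear) = Fintype.card m := by
  have h : Aᵀ.mulVecLin = A.vecMulLinear := LinearMap.ext fun x => mulVec_transpose A x
  rw [← rank_transpose, Matrix.rank, h, LinearMap.finrank_range_add_finrank_ker,
    Module.finrank_fintype_fun_eq_card]

lemma ker_vecMulLinear_fromCols {n₁ n₂ : Type*} (A : Matrix m n₁ K) (B : Matrix m n₂ K) :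
    LinearMap.ker (fromCols A B).vecMulLinear =
      LinearMap.ker A.vecMulLinear ⊓ LinearMap.ker B.vecMulLinear := by
  ext v
  simp [vecMul_fromCols, ← Sum.elim_zero_zero, Sum.elim_eq_iff]

theorem rank_lt_rank_fromCols_iff_s16 (A : Matrix m n K) (B : Matrix m n' K) :
    A.rank < (fromCols A B).rank ↔
      ¬ LinearMap.ker A.vecMulLinear ≤ LinearMap.ker B.vecMulLinear := by
  have hA := rank_add_finrank_ker_vecMulLinear A
  have hAB := rank_add_finrank_ker_vecMulLinear (fromCols A B)
  rw [ker_vecMulLinear_fromCols] at hAB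
  rw [← inf_lt_left]
  constructor
  · intro h
    exact Submodule.lt_of_le_of_finrank_lt_finrank inf_le_left (by omega)
  · intro h
    have := Submodule.finrank_lt_finrank_of_lt h
    omega

theorem rank_lt_rank_fromCols_of_mul_eq_zero {A : Matrix m n K} {B : Matrix m n' K}
    (X : Matrix r m K) (hA : X * A = 0) (hB : X * B ≠ 0) :
    A.rank < (fromCols A B).rank :=
  (rank_lt_rank_fromCols_iff_s16 A B).mpr fun hle => hB (funext fun a => hle (congrFun hA a))

theorem exists_vecMul_eq_zero_forall_vecMul_ne_zero [Infinite K] {ι : Type*} [Finite ι]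
    {A : Matrix m n K} {B : ι → Matrix m n' K} (h : ∀ j, A.rank < (fromCols A (B j)).rank) :
    ∃ w, w ᵥ* A = 0 ∧ ∀ j, w ᵥ* B j ≠ 0 :=
  Submodule.exists_mem_forall_notMem_of_forall_not_le fun j =>
    (rank_lt_rank_fromCols_iff_s16 A (B j)).mp (h j)

theorem rank_lt_rank_fromCols_sub_of_mul_eq_zero [DecidableEq n] (Q : Matrix r (m ⊕ n) K)
    {A A' : Matrix m n K} {B : Matrix m n' K}
    (hdec : Q * fromRows (fromCols A B) (fromCols (1 : Matrix n n K) (0 : Matrix n n' K)) = 0)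
    (hne : Q * fromRows A' (1 : Matrix n n K) ≠ 0) :
    B.rank < (fromCols B (A - A')).rank := by
  rw [mul_fromRows_fromCols_one_zero, ← fromCols_zero, fromCols_ext_iff] at hdec
  rw [mul_fromRows_one] at hne
  refine rank_lt_rank_fromCols_of_mul_eq_zero Q.toCols₁ hdec.2 fun h => hne ?_
  rw [Matrix.mul_sub, sub_eq_zero] at h
  rw [← h, hdec.1]

end Rank

end Matrix

def overXAddOnePow (P : ℝ[X]) (M : ℕ) : RatFunc ℝ :=
  algebraMap ℝ[X] (RatFunc ℝ) P / algebraMap ℝ[X] (RatFunc ℝ) ((X + 1) ^ M)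

lemma X_add_one_pow_ne_zero {R : Type*} [Semiring R] [Nontrivial R] (M : ℕ) :
    ((X : R[X]) + 1) ^ M ≠ 0 := by
  simpa using ((monic_X_add_C (1 : R)).pow M).ne_zero

lemma natDegree_X_add_one_pow {R : Type*} [Semiring R] [Nontrivial R] (M : ℕ) :
    (((X : R[X]) + 1) ^ M).natDegree = M := by
  simpa using natDegree_pow_X_add_C (R := R) M 1

lemma overXAddOnePow_ne_zero {P : ℝ[X]} (hP : P ≠ 0) (M : ℕ) : overXAddOnePow P M ≠ 0 :=
  div_ne_zero (RatFunc.algebraMap_ne_zero hP) (RatFunc.algebraMap_ne_zero (X_add_one_pow_ne_zero M))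

lemma denom_overXAddOnePow_dvd (P : ℝ[X]) (M : ℕ) : (overXAddOnePow P M).denom ∣ (X + 1) ^ M :=
  RatFunc.denom_div_dvd _ _

lemma eval₂_denom_overXAddOnePow_ne_zero {z : ℂ} (hz : z + 1 ≠ 0) (P : ℝ[X]) (M : ℕ) :
    (overXAddOnePow P M).denom.eval₂ (algebraMap ℝ ℂ) z ≠ 0 := by
  obtain ⟨e, he⟩ := denom_overXAddOnePow_dvd P M
  intro h0
  apply pow_ne_zero M hz
  simpa [h0] using congrArg (eval₂ (algebraMap ℝ ℂ) z) he

lemma overXAddOnePow_isStableR (P : ℝ[X]) (M : ℕ) : (overXAddOnePow P M).IsStableR := by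
  intro z hz
  by_contra hre
  refine eval₂_denom_overXAddOnePow_ne_zero (fun h => hre ?_) P M (by rwa [← eval_map])
  have := congrArg Complex.re h
  simp only [Complex.add_re, Complex.one_re, Complex.zero_re] at this
  linarith

lemma overXAddOnePow_isProperR {P : ℝ[X]} {M : ℕ} (h : P.natDegree ≤ M) :
    (overXAddOnePow P M).IsProperR := by
  rcases eq_or_ne P 0 with rfl | hP
  · simp [overXAddOnePow, RatFunc.IsProperR]
  have cross : (overXAddOnePow P M).num * (X + 1) ^ M = P * (overXAddOnePow P M).denom :=
    (RatFunc.num_mul_eq_mul_denom_iff (X_add_one_pow_ne_zero M)).mpr rfl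
  have hnum := RatFunc.num_ne_zero (overXAddOnePow_ne_zero hP M)
  have hdeg := congrArg natDegree cross
  rw [natDegree_mul hnum (X_add_one_pow_ne_zero M), natDegree_mul hP (RatFunc.denom_ne_zero _),
    natDegree_X_add_one_pow] at hdeg
  unfold RatFunc.IsProperR
  omega

theorem overXAddOnePow_mul_eq_of_denom_mul (f : RatFunc ℝ) {D e : ℝ[X]} (he : D = f.denom * e)
    (M : ℕ) : overXAddOnePow D M * f = overXAddOnePow (f.num * e) M := by
  have hf : algebraMap ℝ[X] (RatFunc ℝ) f.denom * f = algebraMap ℝ[X] (RatFunc ℝ) f.num := by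
    rw [mul_comm, ← eq_div_iff (RatFunc.algebraMap_ne_zero f.denom_ne_zero), RatFunc.num_div_denom]
  rw [overXAddOnePow, overXAddOnePow, div_mul_eq_mul_div, he, map_mul, mul_right_comm, hf, map_mul]

lemma eval_overXAddOnePow {z : ℂ} (hz : z + 1 ≠ 0) (P : ℝ[X]) (M : ℕ) :
    (overXAddOnePow P M).eval (algebraMap ℝ ℂ) z = P.eval₂ (algebraMap ℝ ℂ) z / (z + 1) ^ M := by
  have key := RatFunc.eval_mul (f := algebraMap ℝ ℂ) (a := z)
    (eval₂_denom_overXAddOnePow_ne_zero hz P M)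
    (y := algebraMap ℝ[X] (RatFunc ℝ) ((X + 1) ^ M)) (by rw [RatFunc.denom_algebraMap]; simp)
  rw [overXAddOnePow, div_mul_cancel₀ _ (RatFunc.algebraMap_ne_zero (X_add_one_pow_ne_zero M)),
    RatFunc.eval_algebraMap, RatFunc.eval_algebraMap, ← overXAddOnePow] at key
  rw [eq_div_iff (pow_ne_zero M hz)]
  simpa using key.symm

lemma C_mul_overXAddOnePow (c : ℝ) (P : ℝ[X]) (M : ℕ) :
    RatFunc.C c * overXAddOnePow P M = overXAddOnePow (C c * P) M := by
  rw [overXAddOnePow, overXAddOnePow, map_mul, RatFunc.algebraMap_C, mul_div_assoc]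

lemma norm_eval_overXAddOnePow_le {P : ℝ[X]} {M : ℕ} (h : P.natDegree ≤ M) (ω : ℝ) :
    ‖(overXAddOnePow P M).eval (algebraMap ℝ ℂ) (Complex.I * ω)‖ ≤
      ∑ k ∈ Finset.range (M + 1), |P.coeff k| := by
  set z : ℂ := Complex.I * ω
  have h1 : 1 ≤ ‖z + 1‖ := by simpa [z] using Complex.abs_re_le_norm (z + 1)
  have hz : ‖z‖ ≤ ‖z + 1‖ := by simpa [z] using Complex.abs_im_le_norm (z + 1)
  have hz1 : z + 1 ≠ 0 := norm_pos_iff.mp (zero_lt_one.trans_le h1)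
  rw [eval_overXAddOnePow hz1, norm_div, norm_pow,
    div_le_iff₀ (pow_pos (zero_lt_one.trans_le h1) M), eval₂_eq_sum_range' _ (Nat.lt_succ_of_le h),
    Finset.sum_mul]
  refine (norm_sum_le _ _).trans (Finset.sum_le_sum fun k hk => ?_)
  rw [norm_mul, norm_pow, Complex.coe_algebraMap, Complex.norm_real, Real.norm_eq_abs]
  gcongr
  calc ‖z‖ ^ k ≤ ‖z + 1‖ ^ k := by gcongr
    _ ≤ ‖z + 1‖ ^ M := pow_le_pow_right₀ h1 (Nat.lt_succ_iff.mp (Finset.mem_range.mp hk))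

lemma exists_forall_overXAddOnePow_mul_eq {s : Set (RatFunc ℝ)} (hs : s.Finite) :
    ∃ D ≠ 0, ∃ M, ∀ f ∈ s, ∃ P : ℝ[X], P.natDegree ≤ M ∧
      overXAddOnePow D M * f = overXAddOnePow P M := by
  set t := hs.toFinset
  set D := ∏ f ∈ t, f.denom
  have hD : D ≠ 0 := Finset.prod_ne_zero_iff.mpr fun f _ => f.denom_ne_zero
  refine ⟨D, hD, D.natDegree + ∑ f ∈ t, f.num.natDegree, fun f hf => ?_⟩
  have hft : f ∈ t := hs.mem_toFinset.mpr hf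
  obtain ⟨e, he⟩ := Finset.dvd_prod_of_mem RatFunc.denom hft
  refine ⟨f.num * e, ?_, overXAddOnePow_mul_eq_of_denom_mul f he _⟩
  have he_le : e.natDegree ≤ D.natDegree :=
    natDegree_le_of_dvd ⟨f.denom, he.trans (mul_comm _ _)⟩ hD
  have hnum_le : f.num.natDegree ≤ ∑ f ∈ t, f.num.natDegree :=
    Finset.single_le_sum (f := fun f => f.num.natDegree) (fun _ _ => Nat.zero_le _) hft
  have := natDegree_mul_le (p := f.num) (q := e)
  omega

theorem exists_mul_isProperR_isStableR_norm_eval_le {s : Set (RatFunc ℝ)} (hs : s.Finite) {δ : ℝ}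
    (hδ : 0 < δ) :
    ∃ σ : RatFunc ℝ, σ ≠ 0 ∧ ∀ f ∈ s, (σ * f).IsProperR ∧ (σ * f).IsStableR ∧
      ∀ ω : ℝ, ‖(σ * f).eval (algebraMap ℝ ℂ) (Complex.I * ω)‖ ≤ δ := by
  obtain ⟨D, hD, M, hDM⟩ := exists_forall_overXAddOnePow_mul_eq hs
  choose! P hPdeg hP using hDM
  obtain ⟨K, hK⟩ := (hs.image fun f => ∑ k ∈ Finset.range (M + 1), |(P f).coeff k|).bddAbove
  set c := δ / (|K| + 1)
  have hc : 0 < c := by positivity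
  refine ⟨RatFunc.C c * overXAddOnePow D M,
    mul_ne_zero (by simpa using hc.ne') (overXAddOnePow_ne_zero hD M), fun f hf => ?_⟩
  rw [mul_assoc, hP f hf, C_mul_overXAddOnePow]
  have hdeg : (C c * P f).natDegree ≤ M := (natDegree_C_mul_le _ _).trans (hPdeg f hf)
  refine ⟨overXAddOnePow_isProperR hdeg, overXAddOnePow_isStableR _ _,
    fun ω => (norm_eval_overXAddOnePow_le hdeg ω).trans ?_⟩
  calc ∑ k ∈ Finset.range (M + 1), |(C c * P f).coeff k|
      = c * ∑ k ∈ Finset.range (M + 1), |(P f).coeff k| := by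
        simp [coeff_C_mul, abs_mul, abs_of_pos hc, Finset.mul_sum]
    _ ≤ c * (|K| + 1) := by
        gcongr
        linarith [hK ⟨f, hf, rfl⟩, le_abs_self K]
    _ = δ := div_mul_cancel₀ δ (by positivity)

lemma hinfNorm_le {m n : Type*} [Fintype m] [Fintype n] {G : Matrix m n (RatFunc ℝ)} {C : ℝ}
    (hC : 0 ≤ C) (h : ∀ ω : ℝ, ∀ i j, ‖(G i j).eval (algebraMap ℝ ℂ) (Complex.I * ω)‖ ≤ C) :
    hinfNorm G ≤ C :=
  Real.iSup_le (fun ω => Real.iSup_le (fun i => Real.iSup_le (h ω i) hC) hC) hC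

section ModelDetection

variable {N p mu : ℕ} {md mw : Fin N → ℕ}
  {Gu : ∀ _ : Fin N, Matrix (Fin p) (Fin mu) (RatFunc ℝ)}
  {Gd : ∀ j : Fin N, Matrix (Fin p) (Fin (md j)) (RatFunc ℝ)}
  {Gw : ∀ j : Fin N, Matrix (Fin p) (Fin (mw j)) (RatFunc ℝ)}

theorem AMDPSolvable.emdpSolvable (h : AMDPSolvable Gu Gd Gw) : EMDPSolvable Gu Gd := by
  obtain ⟨q, Q, hQ, hdec, hstable, hne, -, -⟩ := h 1 one_pos
  exact ⟨q, Q, hQ, hdec, hstable, hne⟩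

theorem EMDPSolvable.rank_lt_rank_fromCols (h : EMDPSolvable Gu Gd) (i j : Fin N) (hji : j ≠ i) :
    (Gd i).rank < (fromCols (Gd i) (Gu i - Gu j)).rank := by
  obtain ⟨q, Q, -, hdec, -, hne⟩ := h
  exact Matrix.rank_lt_rank_fromCols_sub_of_mul_eq_zero (Q i) (hdec i) (hne i j hji.symm)

theorem exists_amdp_filter_of_vecMul {i : Fin N} {w : Fin p → RatFunc ℝ} (hw : w ᵥ* Gd i = 0)
    (hne : ∀ j, j ≠ i → w ᵥ* (Gu i - Gu j) ≠ 0) {ε : ℝ} (hε : 0 < ε) :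
    ∃ Q : Matrix (Fin 1) (Fin p ⊕ Fin mu) (RatFunc ℝ),
      (Q.IsProperR ∧ Q.IsStableR) ∧
      Q * fromRows (fromCols (Gu i) (Gd i))
        (fromCols (1 : Matrix (Fin mu) (Fin mu) (RatFunc ℝ))
          (0 : Matrix (Fin mu) (Fin (md i)) (RatFunc ℝ))) = 0 ∧
      (∀ j, (Q * fromRows (fromCols (Gu j) (Gd j))
        (fromCols (1 : Matrix (Fin mu) (Fin mu) (RatFunc ℝ))
          (0 : Matrix (Fin mu) (Fin (md j)) (RatFunc ℝ)))).IsStableR) ∧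
      (∀ j, j ≠ i → Q * fromRows (Gu j) (1 : Matrix (Fin mu) (Fin mu) (RatFunc ℝ)) ≠ 0) ∧
      (∀ j, (Q * fromRows (Gw j) (0 : Matrix (Fin mu) (Fin (mw j)) (RatFunc ℝ))).IsStableR) ∧
      hinfNorm (Q * fromRows (Gw i) (0 : Matrix (Fin mu) (Fin (mw i)) (RatFunc ℝ))) < ε := by
  set Q₁ := replicateRow (Fin 1) w
  set R : Matrix (Fin 1) (Fin p ⊕ Fin mu) (RatFunc ℝ) := fromCols Q₁ (-(Q₁ * Gu i))
  set s : Set (RatFunc ℝ) := Set.range R.uncurry ∪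
    (⋃ j, Set.range (R * fromRows (fromCols (Gu j) (Gd j))
      (fromCols (1 : Matrix (Fin mu) (Fin mu) (RatFunc ℝ))
        (0 : Matrix (Fin mu) (Fin (md j)) (RatFunc ℝ)))).uncurry) ∪
    ⋃ j, Set.range (R * fromRows (Gw j) (0 : Matrix (Fin mu) (Fin (mw j)) (RatFunc ℝ))).uncurry
  have hs : s.Finite :=
    ((Set.finite_range _).union (Set.finite_iUnion fun _ => Set.finite_range _)).union
      (Set.finite_iUnion fun _ => Set.finite_range _)
  obtain ⟨σ, hσ, hσs⟩ := exists_mul_isProperR_isStableR_norm_eval_le hs (half_pos hε)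
  have hR : ∀ a b, R a b ∈ s := fun a b => Or.inl (Or.inl ⟨(a, b), rfl⟩)
  refine ⟨σ • R, ⟨fun a b => (hσs _ (hR a b)).1, fun a b => (hσs _ (hR a b)).2.1⟩, ?_,
    fun j a b => ?_, fun j hj => ?_, fun j a b => ?_, ?_⟩
  · rw [Matrix.smul_mul, mul_fromRows_fromCols_one_zero]
    simp [R, Q₁, ← replicateRow_vecMul, hw]
  · rw [Matrix.smul_mul]
    exact (hσs _ (Or.inl (Or.inr (Set.mem_iUnion.mpr ⟨j, (a, b), rfl⟩)))).2.1
  · rw [Matrix.smul_mul, mul_fromRows_one]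
    simpa [R, Q₁, ← replicateRow_vecMul, hσ, ← sub_eq_add_neg, sub_eq_zero, vecMul_sub, eq_comm]
      using hne j hj
  · rw [Matrix.smul_mul]
    exact (hσs _ (Or.inr (Set.mem_iUnion.mpr ⟨j, (a, b), rfl⟩))).2.1
  · rw [Matrix.smul_mul]
    refine (hinfNorm_le (half_pos hε).le fun ω a b => ?_).trans_lt (half_lt_self hε)
    exact (hσs _ (Or.inr (Set.mem_iUnion.mpr ⟨i, (a, b), rfl⟩))).2.2 ω

theorem AMDPSolvable.of_rank_lt_rank_fromCols
    (h : ∀ i j : Fin N, j ≠ i → (Gd i).rank < (fromCols (Gd i) (Gu i - Gu j)).rank) :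
    AMDPSolvable Gu Gd Gw := by
  intro ε hε
  have : Infinite (RatFunc ℝ) := Infinite.of_injective _ (RatFunc.algebraMap_injective ℝ)
  have hw : ∀ i, ∃ w : Fin p → RatFunc ℝ, w ᵥ* Gd i = 0 ∧
      ∀ j : {j // j ≠ i}, w ᵥ* (Gu i - Gu j) ≠ 0 := fun i =>
    Matrix.exists_vecMul_eq_zero_forall_vecMul_ne_zero fun j => h i j j.2
  choose w hwd hwu using hw
  choose Q hQ using fun i =>
    exists_amdp_filter_of_vecMul (Gw := Gw) (hwd i) (fun j hj => hwu i ⟨j, hj⟩) hε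
  exact ⟨fun _ => 1, Q, fun i => (hQ i).1, fun i => (hQ i).2.1, fun i j => (hQ i).2.2.1 j,
    fun i j hij => (hQ i).2.2.2.1 j hij.symm, fun i j => (hQ i).2.2.2.2.1 j,
    fun i => (hQ i).2.2.2.2.2⟩

end ModelDetection

/-- **Solvability of the AMDP**: the AMDP is solvable iff the EMDP is solvable,
equivalently iff the multiple model (noise inputs set to zero) is model
detectable. -/
theorem amdp_solvable_iff
    (N p mu : ℕ) (md mw : Fin N → ℕ)
    (Gu : ∀ _ : Fin N, Matrix (Fin p) (Fin mu) (RatFunc ℝ))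
    (Gd : ∀ j : Fin N, Matrix (Fin p) (Fin (md j)) (RatFunc ℝ))
    (Gw : ∀ j : Fin N, Matrix (Fin p) (Fin (mw j)) (RatFunc ℝ)) :
    (AMDPSolvable Gu Gd Gw ↔ EMDPSolvable Gu Gd) ∧
      (AMDPSolvable Gu Gd Gw ↔
        ∀ i j : Fin N, j ≠ i →
          (Gd i).rank < (Matrix.fromCols (Gd i) (Gu i - Gu j)).rank) :=
  ⟨⟨AMDPSolvable.emdpSolvable, fun h => .of_rank_lt_rank_fromCols h.rank_lt_rank_fromCols⟩,
    ⟨fun h => h.emdpSolvable.rank_lt_rank_fromCols, .of_rank_lt_rank_fromCols⟩⟩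

end
end
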